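/- In the quantum torus X_q associated with the t-quantized Cartan matrix of a finite type Lie algebra, set B̃_{j,s} to be the bar-invariant monomial corresponding to X_{j,s-1} X_{j,s+1} Π_{k : d(j,k)=1} X_{k,s}^{c_{k,j}}. Then for all admissible indices: X̃_{i,p} * B̃_{j,s}^{-1} = q^{β(i,p;j,s)} B̃_{j,s}^{-1} * X̃_{i,p} where β(i,p;j,s) = δ_{i,j}(-δ_{p-s,1} + δ_{p-s,-1})·(α_i, α_i); and B̃^{-1}_{i,t} * B̃_{j,u}^{-1} = q^{α(i,t;j,u)} B̃_{j,u}^{-1} * B̃_{i,t}^{-1}, where α(i,t;j,u) = ±(α_i,α_i) if (i,t) = (j, u±2), ±2(α_i,α_j) if d(i,j)=1 and t = u±1, and 0 otherwise. -/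

import Mathlib

/-!
STATEMENT 3.  In the quantum torus `X_q` associated with the `t`-quantized Cartan matrix
of a finite type Lie algebra, set `B̃_{j,s}` to be (the bar-invariant monomial
corresponding to) `X_{j,s-1} X_{j,s+1} Π_{k : d(j,k)=1} X_{k,s}^{c_{k,j}}`.  Then for all
admissible indices (i.e. indices of the repetition lattice determined by a height
function `ξ`):
`X̃_{i,p} * B̃_{j,s}⁻¹ = q^{β(i,p;j,s)} B̃_{j,s}⁻¹ * X̃_{i,p}` where
`β(i,p;j,s) = δ_{i,j}(-δ_{p-s,1} + δ_{p-s,-1})(α_i,α_i)`, and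
`B̃_{i,t}⁻¹ * B̃_{j,u}⁻¹ = q^{α(i,t;j,u)} B̃_{j,u}⁻¹ * B̃_{i,t}⁻¹` where
`α(i,t;j,u) = ±(α_i,α_i)` if `(i,t) = (j,u±2)`, `±2(α_i,α_j)` if `d(i,j)=1` and
`t = u±1`, and `0` otherwise.  Here `(α_i,α_j) = d_i c_{i,j}` (so `(α_i,α_i) = 2 d_i`).
The quantum torus is modelled abstractly via invertible generators `X i p : Aˣ` and
central `q`-powers `qh : ℚ → Aˣ`; `B̃_{j,s}` is represented by the ordered product
`Bu j s` (the bar-invariant normalization is a central `q`-power, which does not affect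
the stated commutation relations).
-/

noncomputable section

open scoped Classical

namespace Stmt3

/-- Formal Laurent series over `ℚ`. -/
abbrev K : Type := LaurentSeries ℚ

/-- The variable `t`. -/
def tv : K := HahnSeries.single 1 1

variable {I : Type*} [Fintype I] [LinearOrder I]

/-- The `t`-quantized Cartan matrix `Ⲝ(t)`. -/
def uC (C : I → I → ℤ) : Matrix I I K :=
  Matrix.of fun i j => if i = j then tv + tv⁻¹ else (C i j : K)

/-- The symmetrized matrix `ⲜB(t) = Ⲝ(t) D⁻¹`. -/
def uB (C : I → I → ℤ) (d : I → ℤ) : Matrix I I K :=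
  uC C * Matrix.diagonal fun i => ((d i : K))⁻¹

/-- Its inverse `B̃(t)`. -/
def tB (C : I → I → ℤ) (d : I → ℤ) : Matrix I I K := (uB C d)⁻¹

/-- The Laurent coefficients `b̃_{i,j}(u)`. -/
def btil (C : I → I → ℤ) (d : I → ℤ) (i j : I) (u : ℤ) : ℚ := ((tB C d) i j).coeff u

/-- The exponent function `N(i,p;j,s)` governing the quantum torus relations. -/
def Nq (C : I → I → ℤ) (d : I → ℤ) (i : I) (p : ℤ) (j : I) (s : ℤ) : ℚ :=
  btil C d i j (p - s - 1) - btil C d i j (s - p - 1) -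
    btil C d i j (p - s + 1) + btil C d i j (s - p + 1)

/-- The Dynkin diagram of `C`. -/
def dynkinGraph (C : I → I → ℤ) : SimpleGraph I :=
  SimpleGraph.fromRel fun i j => C i j ≠ 0

/-- The monomial `B_{j,s} = X_{j,s-1} X_{j,s+1} Π_{k : d(j,k)=1} X_{k,s}^{c_{k,j}}`
(note `c_{k,j} = 0` for non-adjacent `k ≠ j`, so the product may run over all `k ≠ j`). -/
def Bu (C : I → I → ℤ) {A : Type*} [Ring A] (X : I → ℤ → Aˣ) (j : I) (s : ℤ) : Aˣ :=
  X j (s - 1) * X j (s + 1) *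
    ((Finset.sort (Finset.univ.erase j) (· ≤ ·)).map fun k => X k s ^ (C k j)).prod

/-- The exponent `β(i,p;j,s) = δ_{i,j}(-δ_{p-s,1}+δ_{p-s,-1})(α_i,α_i)`. -/
def betaE (C : I → I → ℤ) (d : I → ℤ) (i : I) (p : ℤ) (j : I) (s : ℤ) : ℚ :=
  (if i = j then 1 else 0) *
    ((if p - s = 1 then (-1 : ℚ) else 0) + (if p - s = -1 then 1 else 0)) * (2 * (d i : ℚ))

/-- The exponent `α(i,t;j,u)`. -/
def alphaE (C : I → I → ℤ) (d : I → ℤ) (i : I) (t : ℤ) (j : I) (u : ℤ) : ℚ :=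
  if i = j ∧ t = u + 2 then 2 * (d i : ℚ)
  else if i = j ∧ t = u - 2 then -(2 * (d i : ℚ))
  else if (dynkinGraph C).Adj i j ∧ t = u + 1 then 2 * ((d i : ℚ) * (C i j : ℚ))
  else if (dynkinGraph C).Adj i j ∧ t = u - 1 then -(2 * ((d i : ℚ) * (C i j : ℚ)))
  else 0

lemma tv_inv : (tv⁻¹ : K) = HahnSeries.single (-1 : ℤ) (1 : ℚ) :=
  inv_eq_of_mul_eq_one_right (by
    rw [tv, HahnSeries.single_mul_single]
    norm_num [HahnSeries.single_zero_one])

lemma single_mul_coeff (b u : ℤ) (r : ℚ) (x : K) :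
    ((HahnSeries.single b r : K) * x).coeff u = r * x.coeff (u - b) := by
  simpa using HahnSeries.coeff_single_mul_add (r := r) (x := x) (a := u - b) (b := b)

lemma intCast_K (m : ℤ) : (m : K) = HahnSeries.single (0:ℤ) (m : ℚ) := by
  rw [← HahnSeries.C_apply, map_intCast]

lemma coeff_sum {α : Type*} (s : Finset α) (f : α → K) (u : ℤ) :
    (∑ a ∈ s, f a).coeff u = ∑ a ∈ s, (f a).coeff u :=
  map_sum (HahnSeries.coeff.addMonoidHom u) f s


lemma tv_pair_coeff (x : K) (u : ℤ) :
    ((tv + tv⁻¹) * x).coeff u = x.coeff (u - 1) + x.coeff (u + 1) := by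
  rw [add_mul, HahnSeries.coeff_add, tv_inv, tv, single_mul_coeff, single_mul_coeff]
  norm_num [sub_neg_eq_add]

lemma key (C : I → I → ℤ) (d : I → ℤ) (hd : ∀ i, 0 < d i) (hdet : IsUnit (uB C d).det)
    (i j : I) (u : ℤ) :
    btil C d i j (u-1) + btil C d i j (u+1)
      + ∑ k ∈ Finset.univ.erase j, (C k j : ℚ) * btil C d i k u
    = if i = j ∧ u = 0 then (d j : ℚ) else 0 := by
  have hdK : ((d j : K)) ≠ 0 := by
    rw [intCast_K]
    exact HahnSeries.single_ne_zero (by exact_mod_cast (hd j).ne')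
  have h1 : tB C d * uB C d = 1 := Matrix.nonsing_inv_mul _ hdet
  have h2 : ∑ k, tB C d i k * uB C d k j = (if i = j then (1:K) else 0) := by
    have := congrArg (fun M : Matrix I I K => M i j) h1
    simpa [Matrix.mul_apply, Matrix.one_apply] using this
  have h3 : ∑ k, tB C d i k * uC C k j = (if i = j then (d j : K) else 0) := by
    have e : ∀ k, tB C d i k * uB C d k j = tB C d i k * uC C k j * (d j : K)⁻¹ := by
      intro k
      rw [uB, Matrix.mul_diagonal, mul_assoc]
    rw [Finset.sum_congr rfl (fun k _ => e k), ← Finset.sum_mul] at h2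
    field_simp at h2
    split_ifs with h <;> simpa [h] using h2
  rw [← Finset.add_sum_erase _ _ (Finset.mem_univ j)] at h3
  have h4 : (tv + tv⁻¹) * tB C d i j
      + ∑ k ∈ Finset.univ.erase j, ((C k j : ℤ) : K) * tB C d i k
      = (if i = j then (d j : K) else 0) := by
    rw [← h3]
    congr 1
    · rw [mul_comm]
      congr 1
      rw [uC]; simp
    · apply Finset.sum_congr rfl
      intro k hk
      rw [mul_comm]
      congr 1
      rw [uC]; simp [(Finset.mem_erase.mp hk).1]
  have h5 := congrArg (fun x : K => x.coeff u) h4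
  simp only [HahnSeries.coeff_add, tv_pair_coeff, coeff_sum] at h5
  have e2 : ∀ k, (((C k j : ℤ) : K) * tB C d i k).coeff u = (C k j : ℚ) * btil C d i k u := by
    intro k
    rw [intCast_K, single_mul_coeff]
    simp [btil]
  rw [Finset.sum_congr rfl (fun k _ => e2 k)] at h5
  have e3 : ((if i = j then (d j : K) else 0).coeff u)
      = if i = j ∧ u = 0 then (d j : ℚ) else 0 := by
    by_cases h : i = j
    · simp only [h, if_true, true_and]
      rw [intCast_K, HahnSeries.coeff_single]
      simp [eq_comm]
    · simp [h]
  rw [e3] at h5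
  simpa [btil] using h5

lemma sumN (C : I → I → ℤ) (d : I → ℤ) (hd : ∀ i, 0 < d i) (hdet : IsUnit (uB C d).det)
    (i : I) (p : ℤ) (j : I) (s : ℤ) :
    Nq C d i p j (s-1) + Nq C d i p j (s+1)
      + ∑ k ∈ Finset.univ.erase j, (C k j : ℚ) * Nq C d i p k s
    = -betaE C d i p j s := by
  have k1 := key C d hd hdet i j (p-s-1)
  have k2 := key C d hd hdet i j (s-p-1)
  have k3 := key C d hd hdet i j (p-s+1)
  have k4 := key C d hd hdet i j (s-p+1)
  have esum : ∑ k ∈ Finset.univ.erase j, (C k j : ℚ) * Nq C d i p k s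
      = (∑ k ∈ Finset.univ.erase j, (C k j : ℚ) * btil C d i k (p-s-1))
        - (∑ k ∈ Finset.univ.erase j, (C k j : ℚ) * btil C d i k (s-p-1))
        - (∑ k ∈ Finset.univ.erase j, (C k j : ℚ) * btil C d i k (p-s+1))
        + (∑ k ∈ Finset.univ.erase j, (C k j : ℚ) * btil C d i k (s-p+1)) := by
    simp only [Nq, mul_sub, mul_add, Finset.sum_sub_distrib, Finset.sum_add_distrib]
  rw [esum, Nq, Nq, betaE]
  rw [show p-(s-1)-1 = p-s from by ring, show (s-1)-p-1 = s-p-2 from by ring,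
    show p-(s-1)+1 = p-s+2 from by ring, show (s-1)-p+1 = s-p from by ring,
    show p-(s+1)-1 = p-s-2 from by ring, show (s+1)-p-1 = s-p from by ring,
    show p-(s+1)+1 = p-s from by ring, show (s+1)-p+1 = s-p+2 from by ring]
  rw [show p-s-1-1 = p-s-2 from by ring, show p-s-1+1 = p-s from by ring] at k1
  rw [show s-p-1-1 = s-p-2 from by ring, show s-p-1+1 = s-p from by ring] at k2
  rw [show p-s+1-1 = p-s from by ring, show p-s+1+1 = p-s+2 from by ring] at k3
  rw [show s-p+1-1 = s-p from by ring, show s-p+1+1 = s-p+2 from by ring] at k4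
  by_cases hij : i = j
  · by_cases h1 : p - s = 1
    · rw [if_pos ⟨hij, by omega⟩] at k1
      rw [if_neg (by rintro ⟨-, h⟩; omega)] at k2
      rw [if_neg (by rintro ⟨-, h⟩; omega)] at k3
      rw [if_pos ⟨hij, by omega⟩] at k4
      rw [if_pos hij, if_pos h1, if_neg (by omega),
        show (d i : ℚ) = (d j : ℚ) from by rw [hij]]
      linarith
    · by_cases h2 : p - s = -1
      · rw [if_neg (by rintro ⟨-, h⟩; omega)] at k1
        rw [if_pos ⟨hij, by omega⟩] at k2
        rw [if_pos ⟨hij, by omega⟩] at k3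
        rw [if_neg (by rintro ⟨-, h⟩; omega)] at k4
        rw [if_pos hij, if_neg h1, if_pos h2,
          show (d i : ℚ) = (d j : ℚ) from by rw [hij]]
        linarith
      · rw [if_neg (by rintro ⟨-, h⟩; omega)] at k1
        rw [if_neg (by rintro ⟨-, h⟩; omega)] at k2
        rw [if_neg (by rintro ⟨-, h⟩; omega)] at k3
        rw [if_neg (by rintro ⟨-, h⟩; omega)] at k4
        rw [if_pos hij, if_neg h1, if_neg h2]
        linarith
  · rw [if_neg (fun h => hij h.1)] at k1 k2 k3 k4
    rw [if_neg hij]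
    linarith

lemma sumBeta (C : I → I → ℤ) (d : I → ℤ) (hsym : ∀ i j, d i * C i j = d j * C j i)
    (i : I) (t : ℤ) (j : I) (u : ℤ) :
    betaE C d i (t-1) j u + betaE C d i (t+1) j u
      + ∑ k ∈ Finset.univ.erase i, (C k i : ℚ) * betaE C d k t j u
    = -alphaE C d i t j u := by
  have hsq : (d i : ℚ) * (C i j : ℚ) = (d j : ℚ) * (C j i : ℚ) := by exact_mod_cast hsym i j
  have esum : ∑ k ∈ Finset.univ.erase i, (C k i : ℚ) * betaE C d k t j u
      = if j = i then 0 else (C j i : ℚ) *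
          ((if t - u = 1 then (-1 : ℚ) else 0) + (if t - u = -1 then 1 else 0)) * (2 * (d j : ℚ)) := by
    rw [Finset.sum_congr rfl (fun k hk => show (C k i : ℚ) * betaE C d k t j u
        = if k = j then (C j i : ℚ) *
            ((if t - u = 1 then (-1 : ℚ) else 0) + (if t - u = -1 then 1 else 0)) * (2 * (d j : ℚ))
          else 0 from by
      by_cases hkj : k = j
      · subst hkj; rw [if_pos rfl, betaE, if_pos rfl, one_mul]; ring
      · rw [if_neg hkj, betaE, if_neg hkj]; ring)]
    rw [Finset.sum_ite_eq' (Finset.univ.erase i) j]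
    by_cases hji : j = i
    · rw [if_neg (by simp [hji]), if_pos hji]
    · rw [if_pos (by simp [hji]), if_neg hji]
  rw [esum, betaE, betaE, alphaE]
  have hAdj : (dynkinGraph C).Adj i j ↔ i ≠ j ∧ (C i j ≠ 0 ∨ C j i ≠ 0) := by
    rw [dynkinGraph]
    exact SimpleGraph.fromRel_adj _ i j
  by_cases hij : i = j
  · have hirr : ¬ (dynkinGraph C).Adj i j := by rw [← hij]; exact SimpleGraph.irrefl _
    rw [if_pos hij, if_pos hij.symm, if_neg (show ¬((dynkinGraph C).Adj i j ∧ t = u + 1) from fun h => hirr h.1), if_neg (show ¬((dynkinGraph C).Adj i j ∧ t = u - 1) from fun h => hirr h.1)]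
    rw [show (d i : ℚ) = (d j : ℚ) from by rw [hij]]
    by_cases h1 : t = u + 2
    · rw [if_pos (show i = j ∧ t = u + 2 from ⟨hij, h1⟩), if_pos (by omega : t - 1 - u = 1), if_neg (by omega : ¬ t - 1 - u = -1),
        if_neg (by omega : ¬ t + 1 - u = 1), if_neg (by omega : ¬ t + 1 - u = -1)]
      ring
    · by_cases h2 : t = u - 2
      · rw [if_neg (show ¬(i = j ∧ t = u + 2) from fun h => h1 h.2), if_pos (show i = j ∧ t = u - 2 from ⟨hij, h2⟩), if_neg (by omega : ¬ t - 1 - u = 1),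
          if_neg (by omega : ¬ t - 1 - u = -1), if_neg (by omega : ¬ t + 1 - u = 1),
          if_pos (by omega : t + 1 - u = -1)]
        ring
      · by_cases h3 : t = u
        · rw [if_neg (show ¬(i = j ∧ t = u + 2) from fun h => h1 h.2), if_neg (show ¬(i = j ∧ t = u - 2) from fun h => h2 h.2),
            if_pos (by omega : t - 1 - u = -1), if_neg (by omega : ¬ t - 1 - u = 1),
            if_pos (by omega : t + 1 - u = 1), if_neg (by omega : ¬ t + 1 - u = -1)]
          ring
        · rw [if_neg (show ¬(i = j ∧ t = u + 2) from fun h => h1 h.2), if_neg (show ¬(i = j ∧ t = u - 2) from fun h => h2 h.2),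
            if_neg (by omega : ¬ t - 1 - u = 1), if_neg (by omega : ¬ t - 1 - u = -1),
            if_neg (by omega : ¬ t + 1 - u = 1), if_neg (by omega : ¬ t + 1 - u = -1)]
          ring
  · rw [if_neg hij, if_neg (show ¬ j = i from fun h => hij h.symm), if_neg (show ¬(i = j ∧ t = u + 2) from fun h => hij h.1),
      if_neg (show ¬(i = j ∧ t = u - 2) from fun h => hij h.1)]
    by_cases hadj : (dynkinGraph C).Adj i j
    · by_cases h1 : t = u + 1
      · rw [if_pos (show (dynkinGraph C).Adj i j ∧ t = u + 1 from ⟨hadj, h1⟩), if_pos (by omega : t - u = 1), if_neg (by omega : ¬ t - u = -1)]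
        linarith
      · by_cases h2 : t = u - 1
        · rw [if_neg (show ¬((dynkinGraph C).Adj i j ∧ t = u + 1) from fun h => h1 h.2), if_pos (show (dynkinGraph C).Adj i j ∧ t = u - 1 from ⟨hadj, h2⟩), if_neg (by omega : ¬ t - u = 1),
            if_pos (by omega : t - u = -1)]
          linarith
        · rw [if_neg (show ¬((dynkinGraph C).Adj i j ∧ t = u + 1) from fun h => h1 h.2), if_neg (show ¬((dynkinGraph C).Adj i j ∧ t = u - 1) from fun h => h2 h.2),
            if_neg (by omega : ¬ t - u = 1), if_neg (by omega : ¬ t - u = -1)]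
          ring
    · have hc : C j i = 0 := by
        by_contra hc
        exact hadj (hAdj.mpr ⟨hij, Or.inr hc⟩)
      have hcq : ((C j i : ℤ) : ℚ) = 0 := by exact_mod_cast hc
      rw [if_neg (show ¬((dynkinGraph C).Adj i j ∧ t = u + 1) from fun h => hadj h.1), if_neg (show ¬((dynkinGraph C).Adj i j ∧ t = u - 1) from fun h => hadj h.1), hcq]
      ring

section QT
variable {A : Type*} [Ring A] (qh : ℚ → Aˣ)

def Rr (a b : Aˣ) (r : ℚ) : Prop := a * b = qh r * (b * a)

variable {qh}
variable (hq : ∀ a b : ℚ, qh (a + b) = qh a * qh b)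
         (hcen : ∀ (r : ℚ) (x : A), (qh r : A) * x = x * (qh r : A))

include hq

lemma qh_zero : qh 0 = 1 := by
  have h := hq 0 0
  rw [add_zero] at h
  exact (mul_left_cancel (a := qh 0) (by rw [← h, mul_one])).symm

lemma qh_neg (r : ℚ) : qh (-r) = (qh r)⁻¹ := by
  apply eq_inv_of_mul_eq_one_right
  rw [← hq, show r + -r = 0 from by ring, qh_zero hq]

omit hq
include hcen

lemma qh_cen' (r : ℚ) (x : Aˣ) : qh r * x = x * qh r :=
  Units.ext (by simpa using hcen r x)

include hq

lemma Rr_symm {a b : Aˣ} {r : ℚ} (h : Rr qh a b r) : Rr qh b a (-r) := by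
  rw [Rr, h, qh_neg hq, ← mul_assoc, inv_mul_cancel, one_mul]

lemma Rr_mul_left {a b c : Aˣ} {r r' : ℚ} (h : Rr qh a c r) (h' : Rr qh b c r') :
    Rr qh (a * b) c (r + r') := by
  rw [Rr]
  calc a * b * c = a * (qh r' * (c * b)) := by rw [mul_assoc, h']
    _ = (qh r' * a) * (c * b) := by rw [← mul_assoc, ← qh_cen' hcen]
    _ = qh r' * ((a * c) * b) := by rw [mul_assoc, ← mul_assoc a c b]
    _ = qh r' * ((qh r * (c * a)) * b) := by rw [h]
    _ = (qh r' * qh r) * ((c * a) * b) := by group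
    _ = qh (r + r') * (c * (a * b)) := by rw [← hq, add_comm r' r, mul_assoc c a b]

lemma Rr_mul_right {a b c : Aˣ} {r r' : ℚ} (h : Rr qh a b r) (h' : Rr qh a c r') :
    Rr qh a (b * c) (r + r') := by
  have := Rr_symm hq hcen (Rr_mul_left hq hcen (Rr_symm hq hcen h) (Rr_symm hq hcen h'))
  rwa [neg_add, neg_neg, neg_neg] at this

lemma Rr_one_right (a : Aˣ) : Rr qh a 1 0 := by
  rw [Rr, qh_zero hq, mul_one, one_mul, one_mul]

lemma Rr_inv_right {a b : Aˣ} {r : ℚ} (h : Rr qh a b r) : Rr qh a b⁻¹ (-r) := by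
  have h' : b * a = qh (-r) * (a * b) := Rr_symm hq hcen h
  rw [Rr]
  calc a * b⁻¹ = b⁻¹ * (b * a) * b⁻¹ := by rw [inv_mul_cancel_left]
    _ = b⁻¹ * (qh (-r) * (a * b)) * b⁻¹ := by rw [h']
    _ = qh (-r) * (b⁻¹ * (a * b) * b⁻¹) := by
        rw [← mul_assoc, ← qh_cen' hcen]
        group
    _ = qh (-r) * (b⁻¹ * a) := by group

lemma Rr_inv_left {a b : Aˣ} {r : ℚ} (h : Rr qh a b r) : Rr qh a⁻¹ b (-r) := by
  have := Rr_symm hq hcen (Rr_inv_right hq hcen (Rr_symm hq hcen h))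
  rwa [neg_neg] at this

lemma Rr_pow_right {a b : Aˣ} {r : ℚ} (h : Rr qh a b r) (n : ℕ) :
    Rr qh a (b ^ n) ((n : ℚ) * r) := by
  induction n with
  | zero => simpa using Rr_one_right hq hcen a
  | succ m ih =>
      rw [show ((m + 1 : ℕ) : ℚ) * r = (m : ℚ) * r + r from by push_cast; ring, pow_succ]
      exact Rr_mul_right hq hcen ih h

lemma Rr_zpow_right {a b : Aˣ} {r : ℚ} (h : Rr qh a b r) (n : ℤ) :
    Rr qh a (b ^ n) ((n : ℚ) * r) := by
  cases n with
  | ofNat m =>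
      rw [show (Int.ofNat m) = (m : ℤ) from rfl, zpow_natCast,
        show (((m : ℤ)) : ℚ) = (m : ℚ) from by push_cast; ring]
      exact Rr_pow_right hq hcen h m
  | negSucc m =>
      rw [show ((Int.negSucc m : ℤ) : ℚ) * r = -(((m + 1 : ℕ) : ℚ) * r) from by
          push_cast [Int.negSucc_eq]; ring, zpow_negSucc]
      exact Rr_inv_right hq hcen (Rr_pow_right hq hcen h (m + 1))

lemma Rr_list_prod {ι : Type*} {a : Aˣ} (f : ι → Aˣ) (g : ι → ℚ) :
    ∀ (l : List ι), (∀ x ∈ l, Rr qh a (f x) (g x)) →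
      Rr qh a ((l.map f).prod) ((l.map g).sum)
  | [], _ => by simpa using Rr_one_right hq hcen a
  | (x :: l), h => by
      simp only [List.map_cons, List.prod_cons, List.sum_cons]
      exact Rr_mul_right hq hcen (h x (by simp))
        (Rr_list_prod f g l (fun y hy => h y (List.mem_cons_of_mem _ hy)))

end QT


lemma hBu {A : Type*} [Ring A] {qh : ℚ → Aˣ}
    (hq : ∀ a b : ℚ, qh (a + b) = qh a * qh b)
    (hcen : ∀ (r : ℚ) (x : A), (qh r : A) * x = x * (qh r : A))
    (C : I → I → ℤ) (X : I → ℤ → Aˣ) (a : Aˣ) (ga : I → ℤ → ℚ)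
    (h : ∀ k s', Rr qh a (X k s') (ga k s')) (j : I) (s : ℤ) :
    Rr qh a (Bu C X j s)
      (ga j (s-1) + ga j (s+1) + ∑ k ∈ Finset.univ.erase j, (C k j : ℚ) * ga k s) := by
  have hl := Rr_list_prod hq hcen (fun k => X k s ^ (C k j))
    (fun k => (C k j : ℚ) * ga k s) (Finset.sort (Finset.univ.erase j) (· ≤ ·))
    (fun k _ => Rr_zpow_right hq hcen (h k s) (C k j))
  have hsum : ((Finset.sort (Finset.univ.erase j) (· ≤ ·)).map
      (fun k => (C k j : ℚ) * ga k s)).sum = ∑ k ∈ Finset.univ.erase j, (C k j : ℚ) * ga k s := by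
    rw [← Finset.sum_map_toList]
    exact List.Perm.sum_eq (List.Perm.map _ (Finset.sort_perm_toList _ _))
  rw [hsum] at hl
  exact Rr_mul_right hq hcen (Rr_mul_right hq hcen (h j (s-1)) (h j (s+1))) hl


theorem stmt3
    (C : I → I → ℤ) (d : I → ℤ)
    (hdiag : ∀ i, C i i = 2)
    (hoff : ∀ i j, i ≠ j → C i j ≤ 0)
    (hd : ∀ i, 0 < d i)
    (hsym : ∀ i j, d i * C i j = d j * C j i)
    (hconn : (dynkinGraph C).Connected)
    (hposdef : ∀ v : I → ℚ, v ≠ 0 → 0 < ∑ i, ∑ j, v i * ((d i * C i j : ℤ) : ℚ) * v j)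
    (hdet : IsUnit (uB C d).det)
    -- a height function determining the repetition lattice
    (ξ : I → ℤ)
    (hxi : ∀ i j, (dynkinGraph C).Adj i j → ξ i = ξ j + 1 ∨ ξ j = ξ i + 1)
    -- the quantum torus
    (A : Type*) [Ring A]
    (qh : ℚ → Aˣ) (hq : ∀ a b : ℚ, qh (a + b) = qh a * qh b)
    (hcen : ∀ (r : ℚ) (x : A), (qh r : A) * x = x * (qh r : A))
    (X : I → ℤ → Aˣ)
    (hrel : ∀ (i : I) (p : ℤ) (j : I) (s : ℤ),
      X i p * X j s = qh (Nq C d i p j s) * (X j s * X i p)) :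
    (∀ (i : I) (p : ℤ) (j : I) (s : ℤ),
        p % 2 = ξ i % 2 → (s + 1) % 2 = ξ j % 2 →
        X i p * (Bu C X j s)⁻¹ = qh (betaE C d i p j s) * ((Bu C X j s)⁻¹ * X i p)) ∧
      (∀ (i : I) (t : ℤ) (j : I) (u : ℤ),
        (t + 1) % 2 = ξ i % 2 → (u + 1) % 2 = ξ j % 2 →
        (Bu C X i t)⁻¹ * (Bu C X j u)⁻¹ =
          qh (alphaE C d i t j u) * ((Bu C X j u)⁻¹ * (Bu C X i t)⁻¹)) := by
  have part1 : ∀ (i : I) (p : ℤ) (j : I) (s : ℤ),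
      Rr qh (X i p) ((Bu C X j s)⁻¹) (betaE C d i p j s) := by
    intro i p j s
    have hB : Rr qh (X i p) (Bu C X j s)
        (Nq C d i p j (s-1) + Nq C d i p j (s+1)
          + ∑ k ∈ Finset.univ.erase j, (C k j : ℚ) * Nq C d i p k s) :=
      hBu hq hcen C X (X i p) (fun k s' => Nq C d i p k s') (fun k s' => hrel i p k s') j s
    have h2 := Rr_inv_right hq hcen hB
    rwa [sumN C d hd hdet i p j s, neg_neg] at h2
  constructor
  · exact fun i p j s _ _ => part1 i p j s
  · intro i t j u _ _
    have r1 : Rr qh ((Bu C X j u)⁻¹) (Bu C X i t)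
        (-betaE C d i (t-1) j u + -betaE C d i (t+1) j u
          + ∑ k ∈ Finset.univ.erase i, (C k i : ℚ) * -betaE C d k t j u) :=
      hBu hq hcen C X _ (fun k s' => -betaE C d k s' j u)
        (fun k s' => Rr_symm hq hcen (part1 k s' j u)) i t
    have r3 := Rr_inv_left hq hcen (Rr_symm hq hcen r1)
    have e : -(-(-betaE C d i (t-1) j u + -betaE C d i (t+1) j u
          + ∑ k ∈ Finset.univ.erase i, (C k i : ℚ) * -betaE C d k t j u))
        = alphaE C d i t j u := by
      have hs := sumBeta C d hsym i t j u
      have e2 : ∑ k ∈ Finset.univ.erase i, (C k i : ℚ) * -betaE C d k t j u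
          = -∑ k ∈ Finset.univ.erase i, (C k i : ℚ) * betaE C d k t j u := by
        rw [← Finset.sum_neg_distrib]
        exact Finset.sum_congr rfl (fun k _ => by ring)
      rw [e2]
      linarith
    rwa [e] at r3


end Stmt3
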